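/- There exists a ℂ-algebra automorphism φ₀ of K = ℂ(x,y) satisfying φ₀(x) = 1 − y and φ₀(y) = (x − y)/x, and any such automorphism has order exactly 5 in Aut_ℂ(K), i.e. φ₀⁵ = id and φ₀ ≠ id. -/

import Mathlib

noncomputable section
open MvPolynomial

/-- `K = ℂ(x,y)`, the field of rational functions in two variables over `ℂ`. -/
abbrev K : Type := FractionRing (MvPolynomial (Fin 2) ℂ)

/-- The generator `x` of `K = ℂ(x,y)`. -/
def Kx : K := algebraMap (MvPolynomial (Fin 2) ℂ) K (X 0)

/-- The generator `y` of `K = ℂ(x,y)`. -/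
def Ky : K := algebraMap (MvPolynomial (Fin 2) ℂ) K (X 1)

/-!
`φ₀` acts on the pair `(x, y)` through `T (a, b) = (1 - b, (a - b) / a)`, so that
`(φ₀ⁿ x, φ₀ⁿ y) = Tⁿ (x, y)`. The map `T` has period `5` at every point where the denominators
met along the orbit are nonzero, hence `φ₀⁵` fixes `x` and `y`, while `φ₀ x = 1 - y ≠ x`.

For existence, `1 - y` and `(x - y)/x` generate `K` as a field (`y = 1 - (1 - y)` and
`x = y / (1 - (x - y)/x)`), so, as `K` has transcendence degree `2`, they are algebraically
independent and `K ≅ ℂ(1 - y, (x - y)/x)`.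
-/

open Set Cardinal

section Cremona

variable {L : Type*} [Field L]

def cremonaStep (p : L × L) : L × L := (1 - p.2, (p.1 - p.2) / p.1)

theorem cremonaStep_iterate_five {a b : L} (ha₀ : a ≠ 0) (hb₀ : b ≠ 0) (ha₁ : a ≠ 1)
    (hb₁ : b ≠ 1) (hab : a ≠ b) : cremonaStep^[5] (a, b) = (a, b) := by
  have ha₁' : 1 - a ≠ 0 := sub_ne_zero.2 ha₁.symm
  have hb₁' : 1 - b ≠ 0 := sub_ne_zero.2 hb₁.symm
  have hab' : a - b ≠ 0 := sub_ne_zero.2 hab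
  calc cremonaStep^[5] (a, b)
      = cremonaStep^[4] (1 - b, (a - b) / a) := rfl
    _ = cremonaStep^[3] (b / a, b * (1 - a) / (a * (1 - b))) := congrArg cremonaStep^[3] <| by
      ext <;> simp only [cremonaStep] <;> field_simp <;> ring
    _ = cremonaStep^[2] ((a - b) / (a * (1 - b)), (a - b) / (1 - b)) :=
      congrArg cremonaStep^[2] <| by ext <;> simp only [cremonaStep] <;> field_simp <;> ring
    _ = cremonaStep ((1 - a) / (1 - b), 1 - a) := congrArg cremonaStep <| by
      ext <;> simp only [cremonaStep] <;> field_simp; ring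
    _ = (a, b) := by ext <;> simp only [cremonaStep] <;> field_simp <;> ring

theorem map_cremonaStep {M F : Type*} [Field M] [FunLike F L M] [RingHomClass F L M] (f : F)
    (p : L × L) : Prod.map f f (cremonaStep p) = cremonaStep (Prod.map f f p) := by
  simp [cremonaStep, map_div₀]

theorem pow_apply_eq_iterate_cremonaStep {R : Type*} [CommSemiring R] [Algebra R L]
    {φ : L ≃ₐ[R] L} {a b : L} (ha : φ a = 1 - b) (hb : φ b = (a - b) / a) (n : ℕ) :
    ((φ ^ n) a, (φ ^ n) b) = cremonaStep^[n] (a, b) := by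
  induction n with
  | zero => rfl
  | succ n ih =>
    rw [Function.iterate_succ_apply', ← ih, pow_succ, AlgEquiv.mul_apply, AlgEquiv.mul_apply,
      ha, hb]
    exact map_cremonaStep (φ ^ n) (a, b)

end Cremona

section RationalFunctionField

variable {ι F E : Type*} [Field F] [Field E] [Algebra F E]

theorem FractionRing.algebraicIndependent_algebraMap_X :
    AlgebraicIndependent F fun i ↦
      algebraMap (MvPolynomial ι F) (FractionRing (MvPolynomial ι F)) (X i) :=
  (algebraicIndependent_X ι F).map' (f := IsScalarTower.toAlgHom F _ _)
    (IsFractionRing.injective _ _)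

theorem FractionRing.adjoin_range_algebraMap_X :
    IntermediateField.adjoin F (range fun i ↦
      algebraMap (MvPolynomial ι F) (FractionRing (MvPolynomial ι F)) (X i)) = ⊤ := by
  rw [← (AlgHom.id F _).fieldRange_eq_top.2 Function.surjective_id]
  refine (IsFractionRing.algHom_fieldRange_eq_of_comp_eq_of_range_eq
    (g := IsScalarTower.toAlgHom F (MvPolynomial ι F) _) rfl ?_).symm
  rw [Algebra.adjoin_range_eq_range_aeval]
  congr 1
  ext i
  simp

theorem MvPolynomial.fractionRing_algHom_ext {f g : FractionRing (MvPolynomial ι F) →ₐ[F] E}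
    (h : ∀ i, f (algebraMap (MvPolynomial ι F) _ (X i)) =
      g (algebraMap (MvPolynomial ι F) _ (X i))) : f = g :=
  IsLocalization.algHom_ext (nonZeroDivisors _) (MvPolynomial.algHom_ext h)

theorem algebraMap_ne_of_eval_ne {p q : MvPolynomial ι F} (x : ι → F)
    (h : eval x p ≠ eval x q) :
    algebraMap (MvPolynomial ι F) (FractionRing (MvPolynomial ι F)) p ≠ algebraMap _ _ q :=
  fun hpq ↦ h (by rw [IsFractionRing.injective _ _ hpq])

theorem AlgebraicIndependent.exists_algEquiv_fractionRing_of_adjoin_eq_top {v : ι → E}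
    (hind : AlgebraicIndependent F v) (hv : IntermediateField.adjoin F (range v) = ⊤) :
    ∃ e : FractionRing (MvPolynomial ι F) ≃ₐ[F] E,
      ∀ i, e (algebraMap (MvPolynomial ι F) _ (X i)) = v i :=
  ⟨(hind.aevalEquivField.trans (IntermediateField.equivOfEq hv)).trans
      IntermediateField.topEquiv,
    fun i ↦ by simp [hind.aevalEquivField_algebraMap_apply_coe]⟩

end RationalFunctionField

universe u in
theorem algebraicIndependent_of_adjoin_eq_top_of_le_trdeg {F : Type*} {ι E : Type u} [Field F]
    [Field E] [Algebra F E] [Finite ι] {v : ι → E}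
    (hv : IntermediateField.adjoin F (range v) = ⊤) (hle : #ι ≤ Algebra.trdeg F E) :
    AlgebraicIndependent F v := by
  have : Algebra.IsAlgebraic (Algebra.adjoin F (range v)) E := by
    rw [← IntermediateField.isAlgebraic_adjoin_iff_top, hv]
    infer_instance
  exact (Algebra.IsAlgebraic.isTranscendenceBasis_of_le_trdeg_of_finite F v hle).1

local notation "ℂ[x,y]" => MvPolynomial (Fin 2) ℂ

theorem Kx_ne_zero : Kx ≠ 0 := by
  rw [← map_zero (algebraMap ℂ[x,y] K)]
  exact algebraMap_ne_of_eval_ne 1 (by simp)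

theorem Ky_ne_zero : Ky ≠ 0 := by
  rw [← map_zero (algebraMap ℂ[x,y] K)]
  exact algebraMap_ne_of_eval_ne 1 (by simp)

theorem Kx_ne_one : Kx ≠ 1 := by
  rw [← map_one (algebraMap ℂ[x,y] K)]
  exact algebraMap_ne_of_eval_ne 0 (by simp)

theorem Ky_ne_one : Ky ≠ 1 := by
  rw [← map_one (algebraMap ℂ[x,y] K)]
  exact algebraMap_ne_of_eval_ne 0 (by simp)

theorem Kx_ne_Ky : Kx ≠ Ky :=
  algebraMap_ne_of_eval_ne ![1, 0] (by simp)

theorem one_sub_Ky_ne_Kx : 1 - Ky ≠ Kx := by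
  rw [Ky, ← map_one (algebraMap ℂ[x,y] K), ← map_sub]
  exact algebraMap_ne_of_eval_ne 0 (by simp)

theorem adjoin_cremona_eq_top :
    IntermediateField.adjoin ℂ (range ![1 - Ky, (Kx - Ky) / Kx]) = ⊤ := by
  rw [eq_top_iff, ← FractionRing.adjoin_range_algebraMap_X, IntermediateField.adjoin_le_iff]
  set F' := IntermediateField.adjoin ℂ (range ![1 - Ky, (Kx - Ky) / Kx])
  have hu : 1 - Ky ∈ F' := IntermediateField.subset_adjoin ℂ _ ⟨0, rfl⟩
  have hw : (Kx - Ky) / Kx ∈ F' := IntermediateField.subset_adjoin ℂ _ ⟨1, rfl⟩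
  have hy : Ky ∈ F' := by simpa only [sub_sub_cancel] using F'.sub_mem F'.one_mem hu
  have hx : Kx ∈ F' := by
    have : Kx = Ky / (1 - (Kx - Ky) / Kx) := by
      field_simp [Kx_ne_zero, Ky_ne_zero]
      ring
    rw [this]
    exact F'.div_mem hy (F'.sub_mem F'.one_mem hw)
  rintro _ ⟨i, rfl⟩
  fin_cases i
  exacts [hx, hy]

theorem algebraicIndependent_cremona : AlgebraicIndependent ℂ ![1 - Ky, (Kx - Ky) / Kx] :=
  algebraicIndependent_of_adjoin_eq_top_of_le_trdeg adjoin_cremona_eq_top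
    FractionRing.algebraicIndependent_algebraMap_X.cardinalMk_le_trdeg

/-- There is a `ℂ`-algebra automorphism `φ₀` of `K = ℂ(x,y)` with `φ₀(x) = 1 - y` and
`φ₀(y) = (x - y)/x` (the Cremona transformation `(x:y:z) ↦ (x(z−y) : z(x−y) : xz)` read in
the chart `z = 1`), and any such automorphism has order exactly `5`. -/
theorem exists_order_five_cremona :
    (∃ φ₀ : K ≃ₐ[ℂ] K, φ₀ Kx = 1 - Ky ∧ φ₀ Ky = (Kx - Ky) / Kx) ∧
    ∀ φ₀ : K ≃ₐ[ℂ] K, φ₀ Kx = 1 - Ky → φ₀ Ky = (Kx - Ky) / Kx →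
      φ₀ ^ 5 = 1 ∧ φ₀ ≠ 1 := by
  refine ⟨?_, fun φ hx hy ↦ ⟨?_, ?_⟩⟩
  · obtain ⟨e, he⟩ :=
      algebraicIndependent_cremona.exists_algEquiv_fractionRing_of_adjoin_eq_top
        adjoin_cremona_eq_top
    exact ⟨e, he 0, he 1⟩
  · have h5 := pow_apply_eq_iterate_cremonaStep hx hy 5
    rw [cremonaStep_iterate_five Kx_ne_zero Ky_ne_zero Kx_ne_one Ky_ne_one Kx_ne_Ky,
      Prod.mk.injEq] at h5
    exact AlgEquiv.coe_toAlgHom_injective <|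
      MvPolynomial.fractionRing_algHom_ext <| Fin.forall_fin_two.2 h5
  · rintro rfl
    exact one_sub_Ky_ne_Kx hx.symm
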